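/- arXiv:1011.3093 — 9 statements merged into one kernel-verified Lean document; each statement's English description precedes it below -/
import Mathlib

section
/- For every positive integer r, the sum C_r := \sum_{\ell=0}^{r-1} \binom{r-1}{\ell} \frac{(-1)^{\ell}}{\ell+1} (H(\ell) - 2H(2\ell+1)) equals -\frac{(2r)!!}{r^2 (2r-1)!!}, i.e. C_r = -\frac{2^{2r} (r!)^2}{r^2 (2r)!}. -/
/-!
With `O(ℓ) = ∑_{j ≤ ℓ} 1/(2j+1)` one has `H(ℓ) - 2 H(2ℓ+1) = -2 O(ℓ)`, and
`binom(r-1, ℓ)/(ℓ+1) = binom(r, ℓ+1)/r`, so the sum is `-2/r ∑_ℓ (-1)^ℓ binom(r, ℓ+1) O(ℓ)`.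
Summation by parts along Pascal's rule turns this into `-2/r ∑_ℓ (-1)^ℓ binom(r-1, ℓ)/(2ℓ+1)`,
and the partial-fraction expansion `∑_k (-1)^k binom(n, k)/(x+k) = n!/(x(x+1)⋯(x+n))`
at `x = 1/2` evaluates this as `-2^r (r-1)!/(r (2r-1)‼)`.
-/

/-- Harmonic number `H(n) = ∑_{k=1}^{n} 1/k`, with `H(n) = 0` for `n ≤ 0`. -/
noncomputable def harmonicH (n : ℤ) : ℚ := ∑ k ∈ Finset.Icc (1 : ℤ) n, (1 : ℚ) / (k : ℚ)

open Finset Nat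

lemma harmonicH_natCast (n : ℕ) : harmonicH n = harmonic n := by
  have hIcc : (Icc 1 n).map Nat.castEmbedding = Icc (1 : ℤ) n := by
    ext k
    simp only [mem_map, mem_Icc, Nat.castEmbedding_apply]
    constructor
    · rintro ⟨i, hi, rfl⟩; omega
    · intro hk; exact ⟨k.toNat, by omega, by omega⟩
  rw [harmonicH, ← hIcc, sum_map, harmonic_eq_sum_Icc]
  simp

lemma two_mul_harmonic_two_mul_add_one (n : ℕ) :
    2 * harmonic (2 * n + 1) = harmonic n + 2 * ∑ j ∈ range (n + 1), (2 * j + 1 : ℚ)⁻¹ := by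
  induction n with
  | zero => norm_num
  | succ n ih =>
    have hhalf : (2 : ℚ) * (2 * (n : ℚ) + 1 + 1)⁻¹ = ((n : ℚ) + 1)⁻¹ := by field_simp; ring
    rw [show 2 * (n + 1) + 1 = 2 * n + 1 + 1 + 1 by ring, harmonic_succ (2 * n + 1 + 1),
      harmonic_succ (2 * n + 1), harmonic_succ n, sum_range_succ]
    push_cast
    linear_combination ih + hhalf

theorem sum_choose_succ_mul_neg_one_pow_mul_sum_range {R : Type*} [CommRing R] (a : ℕ → R)
    (n : ℕ) :
    ∑ k ∈ range (n + 1), ((n + 1).choose (k + 1) : R) * (-1) ^ k * ∑ j ∈ range (k + 1), a j =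
      ∑ k ∈ range (n + 1), (-1) ^ k * (n.choose k : R) * a k := by
  -- Pascal's rule splits each summand into a telescoping part and the diagonal term.
  set g : ℕ → R := fun k ↦ (n.choose k : R) * (-1) ^ k * ∑ j ∈ range k, a j
  have hsplit : ∀ k, ((n + 1).choose (k + 1) : R) * (-1) ^ k * ∑ j ∈ range (k + 1), a j =
      (g k - g (k + 1)) + (-1) ^ k * (n.choose k : R) * a k := by
    intro k
    simp only [g, Nat.choose_succ_succ, sum_range_succ, pow_succ]
    push_cast
    ring
  simp only [hsplit, sum_add_distrib, sum_range_sub', g, Nat.choose_succ_self]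
  simp

theorem sum_range_neg_one_pow_mul_choose_div_add {K : Type*} [Field K] (n : ℕ) (x : K)
    (hx : ∀ i : ℕ, x + i ≠ 0) :
    ∑ k ∈ range (n + 1), (-1) ^ k * (n.choose k : K) / (x + k) =
      n ! / ∏ i ∈ range (n + 1), (x + i) := by
  induction n generalizing x with
  | zero => simp
  | succ n ih =>
    have hx1 : ∀ i : ℕ, x + 1 + i ≠ 0 := fun i ↦ by
      convert hx (i + 1) using 1; push_cast; ring
    have hpascal : ∑ k ∈ range (n + 2), (-1) ^ k * ((n + 1).choose k : K) / (x + k) =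
        ∑ k ∈ range (n + 1), (-1) ^ k * (n.choose k : K) / (x + k) -
          ∑ k ∈ range (n + 1), (-1) ^ k * (n.choose k : K) / (x + 1 + k) := by
      have hext : ∑ k ∈ range (n + 1), (-1) ^ k * (n.choose k : K) / (x + k) =
          ∑ k ∈ range (n + 2), (-1) ^ k * (n.choose k : K) / (x + k) := by
        simp [sum_range_succ _ (n + 1)]
      rw [hext, sum_range_succ' _ (n + 1), sum_range_succ' _ (n + 1), add_sub_right_comm,
        ← sum_sub_distrib, Nat.choose_zero_right, Nat.choose_zero_right]
      congr 1
      refine sum_congr rfl fun k _ ↦ ?_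
      rw [Nat.choose_succ_succ]
      push_cast
      ring
    have hprod : ∏ i ∈ range (n + 2), (x + i) = (∏ i ∈ range (n + 1), (x + i)) * (x + (n + 1)) := by
      rw [prod_range_succ]; push_cast; ring
    have hprod' : ∏ i ∈ range (n + 2), (x + i) = x * ∏ i ∈ range (n + 1), (x + 1 + i) := by
      rw [prod_range_succ', mul_comm]; push_cast; simp only [add_assoc, add_comm (1 : K)]; simp
    have hP : ∏ i ∈ range (n + 1), (x + i) ≠ 0 := prod_ne_zero_iff.mpr fun i _ ↦ hx i
    have hP1 : ∏ i ∈ range (n + 1), (x + 1 + i) ≠ 0 := prod_ne_zero_iff.mpr fun i _ ↦ hx1 i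
    have hP2 : ∏ i ∈ range (n + 2), (x + i) ≠ 0 := prod_ne_zero_iff.mpr fun i _ ↦ hx i
    rw [hpascal, ih x hx, ih (x + 1) hx1, div_sub_div _ _ hP hP1,
      div_eq_div_iff (mul_ne_zero hP hP1) hP2, Nat.factorial_succ]
    push_cast
    linear_combination (n ! * ∏ i ∈ range (n + 1), (x + 1 + i)) * hprod -
      (n ! * ∏ i ∈ range (n + 1), (x + i)) * hprod'

lemma prod_range_two_mul_add_one (n : ℕ) : ∏ i ∈ range (n + 1), (2 * i + 1) = (2 * n + 1)‼ := by
  rw [Nat.doubleFactorial_eq_prod_odd, prod_range_succ']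
  simp

theorem sum_range_neg_one_pow_mul_choose_div_two_mul_add_one (n : ℕ) :
    ∑ k ∈ range (n + 1), (-1) ^ k * (n.choose k : ℚ) / (2 * k + 1) =
      2 ^ n * n ! / (2 * n + 1)‼ := by
  have hhalf : ∑ k ∈ range (n + 1), (-1) ^ k * (n.choose k : ℚ) / (2 * k + 1) =
      2⁻¹ * ∑ k ∈ range (n + 1), (-1) ^ k * (n.choose k : ℚ) / (2⁻¹ + k) := by
    rw [mul_sum]
    refine sum_congr rfl fun k _ ↦ ?_
    field_simp
    ring
  have hprod : ((2 * n + 1)‼ : ℚ) = 2 ^ (n + 1) * ∏ i ∈ range (n + 1), ((2⁻¹ : ℚ) + i) := by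
    calc ((2 * n + 1)‼ : ℚ) = ∏ i ∈ range (n + 1), (2 * ((2⁻¹ : ℚ) + i)) := by
          rw [← prod_range_two_mul_add_one]
          push_cast
          exact prod_congr rfl fun i _ ↦ by ring
      _ = 2 ^ (n + 1) * ∏ i ∈ range (n + 1), ((2⁻¹ : ℚ) + i) := by
          rw [prod_mul_distrib, prod_const, card_range]
  rw [hhalf, sum_range_neg_one_pow_mul_choose_div_add n _ fun i ↦ by positivity, hprod]
  field_simp
  ring

lemma choose_div_succ_mul_harmonicH_sub (n ℓ : ℕ) :
    (n.choose ℓ : ℚ) * ((-1 : ℚ) ^ ℓ / (ℓ + 1)) * (harmonicH ℓ - 2 * harmonicH (2 * ℓ + 1)) =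
      -2 / (n + 1) *
        ((n + 1).choose (ℓ + 1) * (-1) ^ ℓ * ∑ j ∈ range (ℓ + 1), (2 * j + 1 : ℚ)⁻¹) := by
  have hchoose : ((n : ℚ) + 1) * n.choose ℓ = (n + 1).choose (ℓ + 1) * (ℓ + 1) := by
    exact_mod_cast Nat.add_one_mul_choose_eq n ℓ
  have hH : harmonic ℓ - 2 * harmonic (2 * ℓ + 1) =
      -2 * ∑ j ∈ range (ℓ + 1), (2 * j + 1 : ℚ)⁻¹ := by
    linear_combination -two_mul_harmonic_two_mul_add_one ℓ
  rw [show 2 * (ℓ : ℤ) + 1 = ((2 * ℓ + 1 : ℕ) : ℤ) by push_cast; ring, harmonicH_natCast,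
    harmonicH_natCast, hH]
  generalize ∑ j ∈ range (ℓ + 1), (2 * j + 1 : ℚ)⁻¹ = s
  field_simp
  linear_combination (-s) * hchoose

lemma factorial_two_mul_add_two (n : ℕ) :
    (2 * (n + 1))! = 2 ^ (n + 1) * (n + 1)! * (2 * n + 1)‼ := by
  rw [show 2 * (n + 1) = 2 * n + 1 + 1 by ring, Nat.factorial_eq_mul_doubleFactorial,
    show 2 * n + 1 + 1 = 2 * (n + 1) by ring, Nat.doubleFactorial_two_mul]

theorem statement0 (r : ℕ) (hr : 1 ≤ r) :
    ∑ ℓ ∈ Finset.range r,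
      ((r - 1).choose ℓ : ℚ) * ((-1 : ℚ) ^ ℓ / (ℓ + 1)) *
        (harmonicH ℓ - 2 * harmonicH (2 * ℓ + 1)) =
      -(2 ^ (2 * r) * (r.factorial : ℚ) ^ 2) / ((r : ℚ) ^ 2 * ((2 * r).factorial : ℚ)) := by
  obtain ⟨n, rfl⟩ := Nat.exists_eq_add_of_le' hr
  rw [Nat.add_sub_cancel, sum_congr rfl fun ℓ _ ↦ choose_div_succ_mul_harmonicH_sub n ℓ,
    ← mul_sum, sum_choose_succ_mul_neg_one_pow_mul_sum_range]
  simp only [← div_eq_mul_inv]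
  rw [sum_range_neg_one_pow_mul_choose_div_two_mul_add_one, factorial_two_mul_add_two,
    Nat.factorial_succ]
  push_cast
  field_simp
  ring
end

section
/- For all integers r \ge 1 and 1 \le k \le 2r, one has D_r(k) := \sum_{\ell=\lfloor (k-1)/2 \rfloor}^{r-1} 4(-1)^{\ell+k} \binom{r-1}{\ell} \binom{2\ell+1}{k-1} = \binom{r}{k-r} \frac{2k}{r} (-1)^{k+r-1} 2^{2r-k}, where \binom{r}{k-r} is interpreted as 0 when k < r. In particular D_r(k) = 0 for 1 \le k \le r-1. -/
/-!
Writing `r = n + 1`, `k = m + 1`, the sum `∑ₗ (-1)^ℓ C(n,ℓ) C(2ℓ+1,m)` is the coefficient of `X^m` in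
`∑ₗ (-1)^ℓ C(n,ℓ) (X+1)^(2ℓ+1) = (X+1) (1 - (X+1)²)^n = (-X)^n (X+1) (X+2)^n`,
and `(X+1)(X+2)^n = (X+2)^(n+1) - (X+2)^n`. Reading off coefficients with the binomial theorem,
the closed form reduces to the absorption identity `(n+1) C(n,j) = (n+1-j) C(n+1,j)`.
-/

/-- `D_r(k) = 4 ∑_{ℓ=⌊(k-1)/2⌋}^{r-1} (-1)^{ℓ+k} C(r-1,ℓ) C(2ℓ+1,k-1)`. -/
def Dcoef (r k : ℕ) : ℚ :=
  4 * ∑ ℓ ∈ Finset.Icc ((k - 1) / 2) (r - 1),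
    (-1 : ℚ) ^ (ℓ + k) * ((r - 1).choose ℓ : ℚ) * ((2 * ℓ + 1).choose (k - 1) : ℚ)

open Finset Polynomial

section GeneratingFunction

variable {R : Type*} [CommRing R]

theorem alternating_sum_choose_mul_X_add_one_pow_odd (n : ℕ) :
    ∑ ℓ ∈ range (n + 1), C ((-1 : R) ^ ℓ * n.choose ℓ) * (X + 1) ^ (2 * ℓ + 1) =
      C ((-1) ^ n) * (X ^ n * ((X + C 2) ^ (n + 1) - (X + C 2) ^ n)) := by
  have hbase : -(X + 1 : R[X]) ^ 2 + 1 = -(X * (X + C 2)) := by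
    rw [C_ofNat]; ring
  calc ∑ ℓ ∈ range (n + 1), C ((-1 : R) ^ ℓ * n.choose ℓ) * (X + 1) ^ (2 * ℓ + 1)
      = (X + 1) * ∑ ℓ ∈ range (n + 1), (-(X + 1) ^ 2) ^ ℓ * 1 ^ (n - ℓ) * (n.choose ℓ : R[X]) := by
        rw [mul_sum]
        refine sum_congr rfl fun ℓ _ => ?_
        rw [map_mul, map_pow, map_neg, map_one, map_natCast, neg_pow ((X + 1 : R[X]) ^ 2), pow_succ,
          pow_mul]
        ring
    _ = (X + 1) * (-(X * (X + C 2))) ^ n := by rw [← add_pow, hbase]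
    _ = C ((-1) ^ n) * (X ^ n * ((X + C 2) ^ (n + 1) - (X + C 2) ^ n)) := by
        rw [neg_pow, mul_pow, map_pow, map_neg, map_one, C_ofNat]
        ring

theorem alternating_sum_choose_mul_choose_odd (n m : ℕ) :
    ∑ ℓ ∈ range (n + 1), (-1 : R) ^ ℓ * n.choose ℓ * (2 * ℓ + 1).choose m =
      if n ≤ m then
        (-1 : R) ^ n * (2 ^ (n + 1 - (m - n)) * (n + 1).choose (m - n) -
          2 ^ (n - (m - n)) * n.choose (m - n))
      else 0 := by
  have h := congrArg (coeff · m) (alternating_sum_choose_mul_X_add_one_pow_odd (R := R) n)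
  simp only [finsetSum_coeff, coeff_C_mul, coeff_X_add_one_pow, coeff_X_pow_mul', coeff_sub,
    coeff_X_add_C_pow] at h
  rw [h]
  split_ifs <;> ring

end GeneratingFunction

theorem Dcoef_succ_succ (n m : ℕ) :
    Dcoef (n + 1) (m + 1) =
      4 * (-1) ^ (m + 1) * ∑ ℓ ∈ range (n + 1), (-1 : ℚ) ^ ℓ * n.choose ℓ * (2 * ℓ + 1).choose m := by
  have hsub : Icc (m / 2) n ⊆ range (n + 1) := fun ℓ hℓ => by
    simp only [mem_Icc, mem_range] at hℓ ⊢; omega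
  rw [Dcoef, Nat.add_sub_cancel, Nat.add_sub_cancel, mul_assoc, mul_sum (range (n + 1)),
    ← sum_subset hsub]
  · exact congrArg (4 * ·) (sum_congr rfl fun ℓ _ => by ring)
  · intro ℓ hℓn hℓ
    have hsmall : 2 * ℓ + 1 < m := by rw [mem_range] at hℓn; rw [mem_Icc] at hℓ; omega
    simp [Nat.choose_eq_zero_of_lt hsmall]

theorem four_mul_two_pow_mul_choose_sub (n j : ℕ) :
    4 * ((2 : ℚ) ^ (n + 1 - j) * (n + 1).choose j - 2 ^ (n - j) * n.choose j) =
      (n + 1).choose j * (2 * (n + j + 1) / (n + 1)) * 2 ^ (n + 1 - j) := by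
  rcases lt_or_ge n j with hnj | hjn
  · rcases Nat.lt_or_ge (n + 1) j with hj | hj
    · simp [Nat.choose_eq_zero_of_lt hj, Nat.choose_eq_zero_of_lt hnj]
    · obtain rfl : j = n + 1 := by omega
      simp only [Nat.choose_self, Nat.choose_eq_zero_of_lt hnj, Nat.sub_self]
      field_simp
      push_cast
      ring
  · obtain ⟨t, rfl⟩ := Nat.exists_eq_add_of_le hjn
    have hchoose : ((j + t).choose j : ℚ) * (j + t + 1) = (j + t + 1).choose j * (t + 1) := by
      have h := Nat.choose_mul_succ_eq (j + t) j
      rw [show j + t + 1 - j = t + 1 by omega] at h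
      exact_mod_cast h
    rw [show j + t + 1 - j = t + 1 by omega, show j + t - j = t by omega]
    field_simp
    push_cast
    linear_combination (-4 * 2 ^ t : ℚ) * hchoose

theorem statement3_general (r k : ℕ) (hr : 1 ≤ r) (hk1 : 1 ≤ k) :
    Dcoef r k =
      (if r ≤ k then (r.choose (k - r) : ℚ) else 0) * (2 * (k : ℚ) / (r : ℚ)) *
        (-1 : ℚ) ^ (k + r - 1) * 2 ^ (2 * r - k) ∧
    (k ≤ r - 1 → Dcoef r k = 0) := by
  obtain ⟨n, rfl⟩ := Nat.exists_eq_add_of_le' hr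
  obtain ⟨m, rfl⟩ := Nat.exists_eq_add_of_le' hk1
  have hclosed : Dcoef (n + 1) (m + 1) =
      (if n + 1 ≤ m + 1 then ((n + 1).choose (m + 1 - (n + 1)) : ℚ) else 0) *
        (2 * ((m + 1 : ℕ) : ℚ) / ((n + 1 : ℕ) : ℚ)) * (-1 : ℚ) ^ (m + 1 + (n + 1) - 1) *
          2 ^ (2 * (n + 1) - (m + 1)) := by
    rw [Dcoef_succ_succ, alternating_sum_choose_mul_choose_odd]
    rcases le_or_gt n m with hnm | hmn
    · obtain ⟨j, rfl⟩ := Nat.exists_eq_add_of_le hnm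
      rw [if_pos hnm, if_pos (by omega), show n + j - n = j by omega,
        show n + j + 1 - (n + 1) = j by omega, show 2 * (n + 1) - (n + j + 1) = n + 1 - j by omega,
        show n + j + 1 + (n + 1) - 1 = n + j + 1 + n by omega]
      push_cast
      linear_combination (-1 : ℚ) ^ (n + j + 1 + n) * four_mul_two_pow_mul_choose_sub n j
    · rw [if_neg (by omega), if_neg (by omega)]
      simp
  exact ⟨hclosed, fun hk => by rw [hclosed, if_neg (by omega)]; simp⟩

theorem statement3 (r k : ℕ) (hr : 1 ≤ r) (hk1 : 1 ≤ k) (hk2 : k ≤ 2 * r) :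
    Dcoef r k =
      (if r ≤ k then (r.choose (k - r) : ℚ) else 0) * (2 * (k : ℚ) / (r : ℚ)) *
        (-1 : ℚ) ^ (k + r - 1) * 2 ^ (2 * r - k) ∧
    (k ≤ r - 1 → Dcoef r k = 0) :=
  statement3_general r k hr hk1
end

section
/- For all integers r \ge 1 and 1 \le p \le 2r, the sum \widetilde{D}_{r,p} := \sum_{k=p}^{2r} \binom{k-1}{k-p} D_r(k) equals 0 if p is odd, and equals 4 \binom{r-1}{p/2 - 1} (-1)^{p/2 - 1} if p is even. -/
open Finset

theorem sum_range_neg_one_pow_mul_choose_mul_choose {R : Type*} [CommRing R] (n m : ℕ) :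
    ∑ j ∈ range (n + 1), (-1 : R) ^ j * n.choose j * j.choose m =
      if n = m then (-1) ^ m else 0 := by
  rcases lt_or_ge n m with hnm | hmn
  · rw [if_neg hnm.ne]
    refine sum_eq_zero fun j hj => ?_
    rw [Nat.choose_eq_zero_of_lt (show j < m by grind), Nat.cast_zero, mul_zero]
  obtain ⟨d, rfl⟩ := Nat.exists_eq_add_of_le hmn
  have factor (i : ℕ) : (-1 : R) ^ (m + i) * (m + d).choose (m + i) * (m + i).choose m =
      (-1) ^ m * (m + d).choose m * ((-1) ^ i * d.choose i) := by
    have := Nat.choose_mul (n := m + d) (k := m + i) (s := m) (by omega)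
    simp only [Nat.add_sub_cancel_left] at this
    rw [pow_add, mul_assoc, ← Nat.cast_mul, this]
    push_cast
    ring
  have alternating : ∑ i ∈ range (d + 1), (-1 : R) ^ i * d.choose i = if d = 0 then 1 else 0 := by
    simpa using congrArg (Int.cast : ℤ → R) (Int.alternating_sum_range_choose (n := d))
  rw [add_assoc, sum_range_add, sum_eq_zero fun j hj => by
    simp [Nat.choose_eq_zero_of_lt (mem_range.1 hj)], zero_add]
  simp only [factor, ← mul_sum, alternating]
  split_ifs <;> simp_all

theorem sum_range_neg_one_pow_mul_choose_mul_choose_of_lt {R : Type*} [CommRing R]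
    {n N : ℕ} (hN : n < N) (m : ℕ) :
    ∑ j ∈ range N, (-1 : R) ^ j * n.choose j * j.choose m =
      if n = m then (-1) ^ m else 0 := by
  rw [← sum_range_neg_one_pow_mul_choose_mul_choose]
  refine (sum_subset (range_subset_range.2 hN) fun j _ hj => ?_).symm
  rw [Nat.choose_eq_zero_of_lt (show n < j by grind), Nat.cast_zero, mul_zero, zero_mul]

theorem sum_Icc_choose_sub_mul_eq_sum_range {R : Type*} [CommSemiring R] (f : ℕ → R)
    {p : ℕ} (hp : 1 ≤ p) (N : ℕ) :
    ∑ k ∈ Icc p N, ((k - 1).choose (k - p) : R) * f k =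
      ∑ j ∈ range N, (j.choose (p - 1) : R) * f (j + 1) := by
  have shift : ∑ j ∈ range N, (j.choose (p - 1) : R) * f (j + 1) =
      ∑ k ∈ Icc 1 N, ((k - 1).choose (p - 1) : R) * f k := by
    simpa [← Ico_add_one_right_eq_Icc] using
      sum_Ico_add' (fun k => ((k - 1).choose (p - 1) : R) * f k) 0 N 1
  rw [shift]
  refine sum_subset_zero_on_sdiff (Icc_subset_Icc_left hp) (fun k hk => ?_) (fun k hk => ?_)
  · rw [Nat.choose_eq_zero_of_lt (show k - 1 < p - 1 by grind), Nat.cast_zero, zero_mul]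
  · rw [Nat.choose_symm_of_eq_add (show k - 1 = k - p + (p - 1) by grind)]

theorem Dcoef_succ (n k : ℕ) :
    Dcoef (n + 1) k = 4 * ∑ ℓ ∈ range (n + 1),
      (-1 : ℚ) ^ (ℓ + k) * (n.choose ℓ : ℚ) * ((2 * ℓ + 1).choose (k - 1) : ℚ) := by
  rw [Dcoef, Nat.add_sub_cancel]
  congr 1
  refine sum_subset (fun ℓ hℓ => by grind) fun ℓ _ hℓ => ?_
  rw [Nat.choose_eq_zero_of_lt (show 2 * ℓ + 1 < k - 1 by grind), Nat.cast_zero, mul_zero]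

theorem sum_range_neg_one_pow_mul_choose_mul_ite_eq (n p : ℕ) (hp : 1 ≤ p) :
    ∑ ℓ ∈ range (n + 1), -4 * (-1 : ℚ) ^ ℓ * n.choose ℓ *
        (if 2 * ℓ + 1 = p - 1 then (-1) ^ (p - 1) else 0) =
      if Odd p then 0 else 4 * (n.choose (p / 2 - 1) : ℚ) * (-1) ^ (p / 2 - 1) := by
  obtain ⟨s, rfl | rfl⟩ := Nat.even_or_odd' p
  · obtain ⟨t, rfl⟩ := Nat.exists_eq_add_of_le' (show 1 ≤ s by omega)
    rw [if_neg (by simp), sum_eq_single t (fun ℓ _ hℓ => by rw [if_neg (by omega), mul_zero])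
      fun ht => by rw [Nat.choose_eq_zero_of_lt (by grind), Nat.cast_zero]; ring]
    rw [if_pos (by omega), show 2 * (t + 1) - 1 = 2 * t + 1 by omega,
      show 2 * (t + 1) / 2 - 1 = t by omega, pow_succ, pow_mul]
    ring
  · rw [if_pos (odd_two_mul_add_one s)]
    exact sum_eq_zero fun ℓ _ => by rw [if_neg (by omega), mul_zero]

theorem statement4_general (r p : ℕ) (hr : 1 ≤ r) (hp1 : 1 ≤ p) :
    ∑ k ∈ Finset.Icc p (2 * r), ((k - 1).choose (k - p) : ℚ) * Dcoef r k =
      if Odd p then 0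
      else 4 * ((r - 1).choose (p / 2 - 1) : ℚ) * (-1 : ℚ) ^ (p / 2 - 1) := by
  obtain ⟨n, rfl⟩ := Nat.exists_eq_add_of_le' hr
  calc _ = ∑ j ∈ range (2 * (n + 1)), (j.choose (p - 1) : ℚ) * Dcoef (n + 1) (j + 1) :=
        sum_Icc_choose_sub_mul_eq_sum_range _ hp1 _
    _ = ∑ ℓ ∈ range (n + 1), -4 * (-1 : ℚ) ^ ℓ * n.choose ℓ *
          ∑ j ∈ range (2 * (n + 1)), (-1 : ℚ) ^ j * (2 * ℓ + 1).choose j * j.choose (p - 1) := by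
        simp only [Dcoef_succ, Nat.add_sub_cancel, mul_sum]
        rw [sum_comm]
        refine sum_congr rfl fun ℓ _ => sum_congr rfl fun j _ => ?_
        ring
    _ = ∑ ℓ ∈ range (n + 1), -4 * (-1 : ℚ) ^ ℓ * n.choose ℓ *
          if 2 * ℓ + 1 = p - 1 then (-1) ^ (p - 1) else 0 := by
        refine sum_congr rfl fun ℓ hℓ => ?_
        rw [sum_range_neg_one_pow_mul_choose_mul_choose_of_lt (by grind)]
    _ = _ := sum_range_neg_one_pow_mul_choose_mul_ite_eq n p hp1

theorem statement4 (r p : ℕ) (hr : 1 ≤ r) (hp1 : 1 ≤ p) (hp2 : p ≤ 2 * r) :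
    ∑ k ∈ Finset.Icc p (2 * r), ((k - 1).choose (k - p) : ℚ) * Dcoef r k =
      if Odd p then 0
      else 4 * ((r - 1).choose (p / 2 - 1) : ℚ) * (-1 : ℚ) ^ (p / 2 - 1) :=
  statement4_general r p hr hp1
end

section
/- For every integer r \ge 1 and every complex number x, \sum_{k=1}^{2r} D_r(k) \, x (1+x)^{k-1} = 4 x^2 (1-x^2)^{r-1}. -/
open Finset

theorem sum_range_choose_mul_pow_of_lt {R : Type*} [CommSemiring R] (a : R) {n m : ℕ}
    (h : n < m) : ∑ j ∈ range m, (n.choose j : R) * a ^ j = (1 + a) ^ n := by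
  rw [add_comm, add_pow]
  refine (sum_subset (range_subset_range.2 h) fun j _ hj => ?_).symm.trans
    (sum_congr rfl fun j _ => by rw [one_pow, mul_one, mul_comm])
  rw [Nat.choose_eq_zero_of_lt (by simpa using hj), Nat.cast_zero, zero_mul]

theorem sum_Icc_one_eq_sum_range {M : Type*} [AddCommMonoid M] (f : ℕ → M) (n : ℕ) :
    ∑ k ∈ Icc 1 n, f k = ∑ j ∈ range n, f (j + 1) := by
  rw [range_eq_Ico, sum_Ico_add', zero_add, Ico_add_one_right_eq_Icc]

theorem Dcoef_eq_sum_range {r : ℕ} (hr : 1 ≤ r) (k : ℕ) :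
    Dcoef r k = 4 * ∑ ℓ ∈ range r,
      (-1 : ℚ) ^ (ℓ + k) * ((r - 1).choose ℓ : ℚ) * ((2 * ℓ + 1).choose (k - 1) : ℚ) := by
  refine congrArg (4 * ·) (sum_subset (fun ℓ hℓ => ?_) fun ℓ hℓr hℓ => ?_)
  · simp only [mem_Icc, mem_range] at hℓ ⊢
    omega
  · simp only [mem_Icc, mem_range] at hℓr hℓ
    rw [Nat.choose_eq_zero_of_lt (n := 2 * ℓ + 1) (by omega), Nat.cast_zero, mul_zero]

theorem statement5 (r : ℕ) (hr : 1 ≤ r) (x : ℂ) :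
    ∑ k ∈ Finset.Icc 1 (2 * r), (Dcoef r k : ℂ) * x * (1 + x) ^ (k - 1) =
      4 * x ^ 2 * (1 - x ^ 2) ^ (r - 1) := by
  calc ∑ k ∈ Icc 1 (2 * r), (Dcoef r k : ℂ) * x * (1 + x) ^ (k - 1)
      = 4 * x * ∑ ℓ ∈ range r, (-1) ^ (ℓ + 1) * ((r - 1).choose ℓ : ℂ) *
          ∑ j ∈ range (2 * r), ((2 * ℓ + 1).choose j : ℂ) * (-(1 + x)) ^ j := by
        simp only [sum_Icc_one_eq_sum_range, Dcoef_eq_sum_range hr, Nat.add_sub_cancel]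
        push_cast
        simp only [mul_sum, sum_mul]
        rw [sum_comm]
        refine sum_congr rfl fun ℓ _ => sum_congr rfl fun j _ => ?_
        rw [neg_pow (1 + x), pow_add, pow_add]
        ring
    _ = 4 * x * ∑ ℓ ∈ range r, (-1) ^ (ℓ + 1) * ((r - 1).choose ℓ : ℂ) * (-x) ^ (2 * ℓ + 1) := by
        refine congrArg (4 * x * ·) (sum_congr rfl fun ℓ hℓ => ?_)
        rw [sum_range_choose_mul_pow_of_lt _ (by rw [mem_range] at hℓ; omega)]
        ring
    _ = 4 * x ^ 2 * ∑ ℓ ∈ range r, ((r - 1).choose ℓ : ℂ) * (-x ^ 2) ^ ℓ := by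
        rw [mul_sum, mul_sum]
        refine sum_congr rfl fun ℓ _ => ?_
        rw [pow_succ (-x), pow_mul, neg_sq, neg_pow (x ^ 2)]
        ring
    _ = 4 * x ^ 2 * (1 - x ^ 2) ^ (r - 1) := by
        rw [sum_range_choose_mul_pow_of_lt _ (by omega), ← sub_eq_add_neg]
end

section
/- For all integers r \ge 1, 1 \le j \le 2r, and every complex number t, one has \alpha_{r,j}(t) = \sum_{k=j}^{2r} c_{k,j}\bigl(t + \tfrac{1}{2}\bigr) D_r(k) \, t^{2r-k}. -/
/-!
The coefficient `c_{k,j}(z)` is the `(j-1)`-st forward difference of `x ↦ x^(k-1)`, so it vanishes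
for `k < j`; this lets both sums start at `1`. Writing `u = l + 1/2`, both sides then become the same
alternating sum over `l < j`, because for a single `u` the sum over `k` collapses by the binomial
theorem: `∑ₖ C(2ℓ+1, k-1) (u-t)^(k-1) t^(2r-k) = u^(2ℓ+1) t^(2r-2ℓ-2)`.
-/

/-- `c_{r,j}(z) = ∑_{l=0}^{j-1} C(j-1,l) (-1)^l (z-l-1)^{r-1}`. -/
noncomputable def ccoef (r j : ℕ) (z : ℂ) : ℂ :=
  ∑ l ∈ Finset.range j, ((j - 1).choose l : ℂ) * (-1 : ℂ) ^ l * (z - l - 1) ^ (r - 1)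

/-- `α_{r,j}(t) = 4 ∑_{ℓ=⌊(j+1)/2⌋}^{r} C(r-1,ℓ-1) (-1)^{ℓ-1} c_{2ℓ,j}(1/2) t^{2r-2ℓ}`. -/
noncomputable def alphaCoef (r j : ℕ) (t : ℂ) : ℂ :=
  4 * ∑ ℓ ∈ Finset.Icc ((j + 1) / 2) r,
    ((r - 1).choose (ℓ - 1) : ℂ) * (-1 : ℂ) ^ (ℓ - 1) * ccoef (2 * ℓ) j (1 / 2) *
      t ^ (2 * r - 2 * ℓ)

open Finset

theorem sum_range_choose_mul_pow_mul_pow {R : Type*} [CommSemiring R] {m n : ℕ} (hmn : m < n)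
    (x y : R) :
    ∑ i ∈ range n, (m.choose i : R) * x ^ i * y ^ (n - 1 - i) = (x + y) ^ m * y ^ (n - 1 - m) := by
  have hzero : ∀ i ∈ range n, i ∉ range (m + 1) → (m.choose i : R) * x ^ i * y ^ (n - 1 - i) = 0 :=
    fun i _ hi => by rw [Nat.choose_eq_zero_of_lt (by simpa using hi), Nat.cast_zero, zero_mul,
      zero_mul]
  rw [← sum_subset (range_subset_range.mpr hmn) hzero, add_pow, sum_mul]
  refine sum_congr rfl fun i hi => ?_
  rw [show n - 1 - i = (m - i) + (n - 1 - m) by have := mem_range.mp hi; omega, pow_add]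
  ring

theorem Dcoef_succ_eq_sum_range {r : ℕ} (hr : r ≠ 0) (i : ℕ) :
    Dcoef r (i + 1) =
      4 * ∑ ℓ ∈ range r, (-1 : ℚ) ^ (ℓ + (i + 1)) * ((r - 1).choose ℓ : ℚ) *
        ((2 * ℓ + 1).choose i : ℚ) := by
  have hrange : range r = Icc 0 (r - 1) := by ext; simp only [mem_range, mem_Icc]; omega
  rw [Dcoef, Nat.add_sub_cancel, hrange]
  congr 1
  refine sum_subset (Icc_subset_Icc (Nat.zero_le _) le_rfl) fun ℓ hℓ hℓ' => ?_
  simp only [mem_Icc] at hℓ hℓ'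
  rw [Nat.choose_eq_zero_of_lt (n := 2 * ℓ + 1) (k := i) (by omega), Nat.cast_zero, mul_zero]

theorem sum_range_sub_pow_mul_Dcoef_mul_pow {r : ℕ} (hr : r ≠ 0) (u t : ℂ) :
    ∑ i ∈ range (2 * r), (t - u) ^ i * (Dcoef r (i + 1) : ℂ) * t ^ (2 * r - 1 - i) =
      -4 * ∑ ℓ ∈ range r, (-1 : ℂ) ^ ℓ * ((r - 1).choose ℓ : ℂ) * u ^ (2 * ℓ + 1) *
        t ^ (2 * r - (2 * ℓ + 2)) := by
  simp_rw [Dcoef_succ_eq_sum_range hr]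
  push_cast
  simp only [mul_sum, sum_mul]
  rw [sum_comm]
  refine sum_congr rfl fun ℓ hℓ => ?_
  have key := sum_range_choose_mul_pow_mul_pow (show 2 * ℓ + 1 < 2 * r by
    have := mem_range.mp hℓ; omega) (u - t) t
  rw [sub_add_cancel, show 2 * r - 1 - (2 * ℓ + 1) = 2 * r - (2 * ℓ + 2) by omega] at key
  rw [mul_assoc ((-1 : ℂ) ^ ℓ * _), ← key, mul_sum, mul_sum]
  refine sum_congr rfl fun i _ => ?_
  rw [← neg_sub t u, neg_pow (t - u)]
  ring

theorem ccoef_succ_eq_fwdDiff_iter (k n : ℕ) (z : ℂ) :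
    ccoef k (n + 1) z = (fwdDiff 1)^[n] (fun x : ℂ => x ^ (k - 1)) (z - (n + 1)) := by
  rw [ccoef, fwdDiff_iter_eq_sum_shift, ← sum_range_reflect]
  refine sum_congr rfl fun m hm => ?_
  have hmn : m ≤ n := Nat.lt_succ_iff.mp (mem_range.mp hm)
  rw [Nat.add_one_sub_one, Nat.choose_symm hmn, zsmul_eq_mul, nsmul_one, Nat.cast_sub hmn]
  push_cast
  ring

theorem ccoef_eq_zero_of_lt {k j : ℕ} (hk : k ≠ 0) (hkj : k < j) (z : ℂ) : ccoef k j z = 0 := by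
  obtain ⟨n, rfl⟩ := Nat.exists_eq_add_of_lt (Nat.pos_of_ne_zero (by omega : j ≠ 0))
  rw [zero_add, ccoef_succ_eq_fwdDiff_iter, fwdDiff_iter_pow_eq_zero_of_lt (by omega),
    Pi.zero_apply]

theorem alphaCoef_eq_sum_range (r : ℕ) {j : ℕ} (hj : j ≠ 0) (t : ℂ) :
    alphaCoef r j t =
      4 * ∑ ℓ ∈ range r, ((r - 1).choose ℓ : ℂ) * (-1 : ℂ) ^ ℓ * ccoef (2 * ℓ + 2) j (1 / 2) *
        t ^ (2 * r - (2 * ℓ + 2)) := by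
  have hzero : ∀ ℓ ∈ Icc 1 r, ℓ ∉ Icc ((j + 1) / 2) r →
      ((r - 1).choose (ℓ - 1) : ℂ) * (-1 : ℂ) ^ (ℓ - 1) * ccoef (2 * ℓ) j (1 / 2) *
        t ^ (2 * r - 2 * ℓ) = 0 := fun ℓ hℓ hℓ' => by
    simp only [mem_Icc] at hℓ hℓ'
    rw [ccoef_eq_zero_of_lt (by omega) (by omega), mul_zero, zero_mul]
  rw [alphaCoef, sum_subset (Icc_subset_Icc (by omega) le_rfl) hzero,
    ← Ico_add_one_right_eq_Icc, sum_Ico_eq_sum_range, Nat.add_sub_cancel]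
  refine congrArg _ (sum_congr rfl fun ℓ _ => ?_)
  rw [add_comm 1 ℓ, Nat.add_sub_cancel, mul_add_one]

theorem sum_Icc_ccoef_mul_Dcoef_mul_pow (r : ℕ) {j : ℕ} (hj : j ≠ 0) (z t : ℂ) :
    ∑ k ∈ Icc j (2 * r), ccoef k j z * (Dcoef r k : ℂ) * t ^ (2 * r - k) =
      ∑ i ∈ range (2 * r), ccoef (i + 1) j z * (Dcoef r (i + 1) : ℂ) * t ^ (2 * r - 1 - i) := by
  have hzero : ∀ k ∈ Icc 1 (2 * r), k ∉ Icc j (2 * r) →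
      ccoef k j z * (Dcoef r k : ℂ) * t ^ (2 * r - k) = 0 := fun k hk hk' => by
    simp only [mem_Icc] at hk hk'
    rw [ccoef_eq_zero_of_lt (by omega) (by omega), zero_mul, zero_mul]
  rw [sum_subset (Icc_subset_Icc (Nat.one_le_iff_ne_zero.mpr hj) le_rfl) hzero,
    ← Ico_add_one_right_eq_Icc, sum_Ico_eq_sum_range, Nat.add_sub_cancel]
  refine sum_congr rfl fun i _ => ?_
  rw [Nat.sub_sub, add_comm 1 i]

theorem statement8_general (r j : ℕ) (hr : 1 ≤ r) (hj1 : 1 ≤ j) (t : ℂ) :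
    alphaCoef r j t =
      ∑ k ∈ Finset.Icc j (2 * r), ccoef k j (t + 1 / 2) * (Dcoef r k : ℂ) * t ^ (2 * r - k) := by
  have hj : j ≠ 0 := Nat.one_le_iff_ne_zero.mp hj1
  rw [alphaCoef_eq_sum_range r hj, sum_Icc_ccoef_mul_Dcoef_mul_pow r hj]
  calc _ = ∑ l ∈ range j, ((j - 1).choose l : ℂ) * (-1 : ℂ) ^ l *
        (-4 * ∑ ℓ ∈ range r, (-1 : ℂ) ^ ℓ * ((r - 1).choose ℓ : ℂ) *
          ((l : ℂ) + 1 / 2) ^ (2 * ℓ + 1) * t ^ (2 * r - (2 * ℓ + 2))) := by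
        simp only [ccoef, mul_sum, sum_mul]
        rw [sum_comm]
        refine sum_congr rfl fun l _ => sum_congr rfl fun ℓ _ => ?_
        rw [Nat.add_succ_sub_one, show (1 / 2 : ℂ) - l - 1 = -((l : ℂ) + 1 / 2) by ring,
          (odd_two_mul_add_one ℓ).neg_pow]
        ring
    _ = ∑ l ∈ range j, ((j - 1).choose l : ℂ) * (-1 : ℂ) ^ l *
        ∑ i ∈ range (2 * r), (t - ((l : ℂ) + 1 / 2)) ^ i * (Dcoef r (i + 1) : ℂ) *
          t ^ (2 * r - 1 - i) := by
        simp_rw [sum_range_sub_pow_mul_Dcoef_mul_pow (Nat.one_le_iff_ne_zero.mp hr)]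
    _ = _ := by
        simp only [ccoef, mul_sum, sum_mul]
        rw [sum_comm]
        refine sum_congr rfl fun i _ => sum_congr rfl fun l _ => ?_
        rw [Nat.add_sub_cancel, show t + 1 / 2 - l - 1 = t - ((l : ℂ) + 1 / 2) by ring]
        ring

theorem statement8 (r j : ℕ) (hr : 1 ≤ r) (hj1 : 1 ≤ j) (hj2 : j ≤ 2 * r) (t : ℂ) :
    alphaCoef r j t =
      ∑ k ∈ Finset.Icc j (2 * r), ccoef k j (t + 1 / 2) * (Dcoef r k : ℂ) * t ^ (2 * r - k) :=
  statement8_general r j hr hj1 t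
end

section
/- For all integers r \ge 1, 1 \le k \le 2r, and every complex number t, one has \alpha_{r,k}(t) = (-1)^{k} \sum_{j=k}^{2r} \binom{j-1}{k-1} \alpha_{r,j}(t). -/
/-!
With `g w = (z - w - 1) ^ (d - 1)` one has `c_{d,m+1}(z) = (-1)^m Δ^m g 0`, so the identity is a
statement about forward differences of a polynomial. Since the shift is `E = 1 + Δ` and `Δ` is
nilpotent on polynomials, `E^{-(n+1)}` expands as `∑_p (-1)^p C(n+p, p) Δ^p`, which gives
`∑_m (-1)^m C(m,n) Δ^m g 0 = (-1)^n Δ^n g (-(n+1))`. For `z = 1/2` and `d` even, `g` is odd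
about `-1/2`, and this reflection turns the right-hand side into `-Δ^n g 0`: that is the identity
for each `c_{2ℓ,·}(1/2)`, and `α_{r,·}` is a linear combination of these with coefficients
independent of `j`.
-/

open Finset fwdDiff

section

variable {A G : Type*} [AddCommGroup A] [AddCommGroup G] (h : A)

theorem fwdDiff_iter_comp_sub (f : A → G) (c : A) (n : ℕ) (y : A) :
    Δ_[h] ^[n] (fun x ↦ f (c - x)) y = (-1 : ℤ) ^ n • Δ_[h] ^[n] f (c - y - n • h) := by
  induction n generalizing f c y with
  | zero => simp
  | succ n ih =>
    have hstep : Δ_[h] (fun x ↦ f (c - x)) = (-1 : ℤ) • fun x ↦ Δ_[h] f (c - h - x) := by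
      ext x
      simp only [fwdDiff, Pi.smul_apply, neg_smul, one_smul, neg_sub]
      rw [sub_right_comm c h x, sub_add_cancel, sub_sub]
    rw [Function.iterate_succ_apply, Function.iterate_succ_apply, hstep, fwdDiff_iter_const_smul,
      Pi.smul_apply, ih, pow_succ, mul_smul, smul_comm, succ_nsmul,
      show c - y - (n • h + h) = c - h - y - n • h by abel]

/-- Gregory–Newton formula for the backward shift `y ↦ y - (n + 1) • h`. -/
theorem sum_range_choose_smul_fwdDiff_iter {M : ℕ} {u : A → G} (hu : Δ_[h] ^[M + 1] u = 0)
    (n : ℕ) (y : A) :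
    ∑ m ∈ range (M + 1), ((-1 : ℤ) ^ m * m.choose n) • Δ_[h] ^[m] u y
      = (-1 : ℤ) ^ n • Δ_[h] ^[n] u (y - (n + 1) • h) := by
  have hsplit : ∀ (v : A → G) m y,
      Δ_[h] ^[m] v y = Δ_[h] ^[m] v (y - h) + Δ_[h] ^[m + 1] v (y - h) :=
    fun v m y ↦ by rw [Function.iterate_succ_apply', fwdDiff, sub_add_cancel, add_sub_cancel]
  induction n generalizing u y with
  | zero =>
    set c := fun m ↦ Δ_[h] ^[m] u (y - h)
    calc _ = ∑ m ∈ range (M + 1), ((-1 : ℤ) ^ m • c m - (-1 : ℤ) ^ (m + 1) • c (m + 1)) :=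
          sum_congr rfl fun m _ ↦ by
            rw [hsplit, Nat.choose_zero_right, Nat.cast_one, mul_one, pow_succ]; module
      _ = _ := by rw [sum_range_sub']; simp [c, hu]
  | succ n ih =>
    have hu' : Δ_[h] ^[M + 1] (Δ_[h] u) = 0 := by
      rw [← Function.iterate_succ_apply, Function.iterate_succ_apply', hu]
      exact fwdDiff_const h 0
    set c := fun m ↦ Δ_[h] ^[m] u (y - h)
    -- Pascal's rule makes the sum telescope up to the same sum for `Δ u` at `y - h`.
    calc _ = ∑ m ∈ range (M + 1), (((-1 : ℤ) ^ m * m.choose (n + 1)) • c m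
            - ((-1 : ℤ) ^ (m + 1) * (m + 1).choose (n + 1)) • c (m + 1))
            - ∑ m ∈ range (M + 1), ((-1 : ℤ) ^ m * m.choose n) • Δ_[h] ^[m] (Δ_[h] u) (y - h) := by
          rw [← sum_sub_distrib]
          refine sum_congr rfl fun m _ ↦ ?_
          rw [hsplit, Nat.choose_succ_succ', ← Function.iterate_succ_apply]
          push_cast
          rw [pow_succ]
          module
      _ = _ := by
        rw [sum_range_sub', ih hu', ← Function.iterate_succ_apply]
        simp [c, hu, pow_succ, succ_nsmul, sub_sub, add_comm h]

theorem sum_range_choose_smul_fwdDiff_iter_of_antisymm {M : ℕ} {u : A → G}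
    (hu : Δ_[h] ^[M + 1] u = 0) (hodd : ∀ x, u (-h - x) = -u x) (n : ℕ) :
    ∑ m ∈ range (M + 1), ((-1 : ℤ) ^ m * m.choose n) • Δ_[h] ^[m] u 0 = -Δ_[h] ^[n] u 0 := by
  have hrefl := fwdDiff_iter_comp_sub h u (-h) n 0
  rw [show (fun x ↦ u (-h - x)) = (-1 : ℤ) • u from funext fun x ↦ by simp [hodd],
    fwdDiff_iter_const_smul, Pi.smul_apply, neg_one_smul] at hrefl
  rw [sum_range_choose_smul_fwdDiff_iter h hu, hrefl,
    show -h - 0 - n • h = 0 - (n + 1) • h by rw [succ_nsmul]; abel]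

end

theorem fwdDiff_iter_sub_sub_one_pow_eq_zero {R : Type*} [CommRing R] (z : R) {k m : ℕ}
    (hkm : k < m) : Δ_[1] ^[m] (fun w : R ↦ (z - w - 1) ^ k) = 0 := by
  have hP : (fun w : R ↦ (z - w - 1) ^ k) = ((Polynomial.C (z - 1) - Polynomial.X) ^ k).eval :=
    funext fun w ↦ by
      rw [Polynomial.eval_pow, Polynomial.eval_sub, Polynomial.eval_C, Polynomial.eval_X,
        sub_right_comm]
  rw [hP]
  refine Polynomial.fwdDiff_iter_eq_zero_of_degree_lt (lt_of_le_of_lt ?_ hkm)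
  compute_degree

theorem ccoef_succ_eq_fwdDiff_iter_s9 (d m : ℕ) (z : ℂ) :
    ccoef d (m + 1) z = (-1) ^ m * Δ_[1] ^[m] (fun w ↦ (z - w - 1) ^ (d - 1)) 0 := by
  rw [fwdDiff_iter_eq_sum_shift, mul_sum, ccoef, Nat.add_sub_cancel]
  refine sum_congr rfl fun l hl ↦ ?_
  obtain ⟨i, rfl⟩ := Nat.exists_eq_add_of_le (Nat.lt_succ_iff.mp (mem_range.mp hl))
  simp only [add_tsub_cancel_left, nsmul_eq_mul, mul_one, zero_add, zsmul_eq_mul, Int.cast_mul,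
    Int.cast_pow, Int.cast_neg, Int.cast_one, Int.cast_natCast]
  have hsign : (-1 : ℂ) ^ (l + i) * (-1) ^ i = (-1) ^ l := by
    rw [pow_add, mul_assoc, ← mul_pow]
    norm_num
  rw [← hsign]
  ring

theorem ccoef_eq_zero_of_lt_s9 {d j : ℕ} (hd : 1 ≤ d) (hdj : d < j) (z : ℂ) : ccoef d j z = 0 := by
  obtain ⟨m, rfl⟩ : ∃ m, j = m + 1 := ⟨j - 1, by omega⟩
  rw [ccoef_succ_eq_fwdDiff_iter_s9, fwdDiff_iter_sub_sub_one_pow_eq_zero z (by omega), Pi.zero_apply,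
    mul_zero]

theorem ccoef_half_eq_neg_one_pow_mul_sum {d k : ℕ} (N : ℕ) (hd : Odd (d - 1)) (hdN : d ≤ N)
    (hk : 1 ≤ k) :
    ccoef d k (1 / 2) =
      (-1) ^ k * ∑ j ∈ Icc k N, ((j - 1).choose (k - 1) : ℂ) * ccoef d j (1 / 2) := by
  obtain ⟨n, rfl⟩ : ∃ n, k = n + 1 := ⟨k - 1, by omega⟩
  obtain ⟨M, rfl⟩ : ∃ M, N = M + 1 := ⟨N - 1, by have := hd.pos; omega⟩
  set u : ℂ → ℂ := fun w ↦ (1 / 2 - w - 1) ^ (d - 1)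
  have hu : Δ_[1] ^[M + 1] u = 0 := fwdDiff_iter_sub_sub_one_pow_eq_zero _ (by omega)
  have hodd : ∀ x, u (-1 - x) = -u x := fun x ↦ by
    simp only [u]
    rw [show (1 / 2 - x - 1 : ℂ) = -(x + 1 / 2) by ring, hd.neg_pow,
      show (1 / 2 - (-1 - x) - 1 : ℂ) = x + 1 / 2 by ring, neg_neg]
  have hreindex : ∑ j ∈ Icc (n + 1) (M + 1), ((j - 1).choose n : ℂ) * ccoef d j (1 / 2)
      = ∑ m ∈ range (M + 1), (m.choose n : ℂ) * ccoef d (m + 1) (1 / 2) := by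
    rw [← map_add_right_Icc n M 1, sum_map]
    simp only [addRightEmbedding_apply, Nat.add_sub_cancel]
    refine sum_subset (fun m hm ↦ ?_) (fun m hm hm' ↦ ?_)
    · exact mem_range.2 (Nat.lt_succ_of_le (mem_Icc.1 hm).2)
    · simp only [mem_range, mem_Icc, not_and_or, not_le] at hm hm'
      rw [Nat.choose_eq_zero_of_lt (by omega), Nat.cast_zero, zero_mul]
  calc ccoef d (n + 1) (1 / 2) = (-1) ^ (n + 1) * -Δ_[1] ^[n] u 0 := by
        rw [ccoef_succ_eq_fwdDiff_iter_s9]; ring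
    _ = _ := by
      rw [← sum_range_choose_smul_fwdDiff_iter_of_antisymm 1 hu hodd, Nat.add_sub_cancel, hreindex]
      simp only [ccoef_succ_eq_fwdDiff_iter_s9, zsmul_eq_mul, Int.cast_mul, Int.cast_pow,
        Int.cast_neg, Int.cast_one, Int.cast_natCast]
      exact congrArg _ (sum_congr rfl fun m _ ↦ by ring)

theorem alphaCoef_eq_sum_Icc_one (r : ℕ) {j : ℕ} (hj : 1 ≤ j) (t : ℂ) :
    alphaCoef r j t = ∑ ℓ ∈ Icc 1 r,
      4 * ((r - 1).choose (ℓ - 1) * (-1) ^ (ℓ - 1) * t ^ (2 * r - 2 * ℓ)) *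
        ccoef (2 * ℓ) j (1 / 2) := by
  rw [alphaCoef, mul_sum]
  refine sum_subset_zero_on_sdiff (Icc_subset_Icc_left (by omega)) (fun ℓ hℓ ↦ ?_)
    (fun ℓ _ ↦ by ring)
  simp only [mem_sdiff, mem_Icc] at hℓ
  rw [ccoef_eq_zero_of_lt_s9 (by omega) (by omega), mul_zero]

theorem statement9_general (r k : ℕ) (hk1 : 1 ≤ k) (t : ℂ) :
    alphaCoef r k t =
      (-1 : ℂ) ^ k * ∑ j ∈ Finset.Icc k (2 * r), ((j - 1).choose (k - 1) : ℂ) * alphaCoef r j t := by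
  rw [sum_congr rfl fun j hj ↦ by rw [alphaCoef_eq_sum_Icc_one r (hk1.trans (mem_Icc.1 hj).1)],
    alphaCoef_eq_sum_Icc_one r hk1]
  simp_rw [mul_sum]
  rw [sum_comm]
  refine sum_congr rfl fun ℓ hℓ ↦ ?_
  obtain ⟨hℓ1, hℓr⟩ := mem_Icc.1 hℓ
  rw [ccoef_half_eq_neg_one_pow_mul_sum (2 * r) ⟨ℓ - 1, by omega⟩ (by omega) hk1, mul_sum,
    mul_sum]
  exact sum_congr rfl fun j _ ↦ by ring

theorem statement9 (r k : ℕ) (hr : 1 ≤ r) (hk1 : 1 ≤ k) (hk2 : k ≤ 2 * r) (t : ℂ) :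
    alphaCoef r k t =
      (-1 : ℂ) ^ k * ∑ j ∈ Finset.Icc k (2 * r), ((j - 1).choose (k - 1) : ℂ) * alphaCoef r j t :=
  statement9_general r k hk1 t
end

section
/- For all integers r \ge 1 and 1 \le m \le 2r, and every complex number t, one has \sum_{l=2r-m}^{2r-1} \binom{l}{2r-m} \hat{\alpha}_{r,l}(t) = (-1)^{m} \alpha_{r,m}(t). -/
/-- `α̂_{r,l}(t) = (-1)^l ∑_{j=1}^{2r-l} C(2r-j,l) α_{r,j}(t)`. -/
noncomputable def alphaHat (r l : ℕ) (t : ℂ) : ℂ :=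
  (-1 : ℂ) ^ l * ∑ j ∈ Finset.Icc 1 (2 * r - l), ((2 * r - j).choose l : ℂ) * alphaCoef r j t

open Finset

section BinomialInversion

variable {R : Type*} [CommRing R]

theorem sum_neg_one_pow_mul_choose_mul_choose {a b : ℕ} {s : Finset ℕ} (hs : Icc a b ⊆ s) :
    ∑ l ∈ s, (-1 : R) ^ l * (b.choose l : R) * (l.choose a : R) =
      if a = b then (-1) ^ a else 0 := by
  rw [← sum_subset hs fun l _ hl' => by
    rw [mem_Icc] at hl'
    rcases Nat.lt_or_ge b l with hbl | hlb
    · simp [Nat.choose_eq_zero_of_lt hbl]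
    · simp [Nat.choose_eq_zero_of_lt (show l < a by omega)]]
  rcases lt_or_ge b a with hba | hab
  · simp [Icc_eq_empty_of_lt hba, hba.ne']
  have hterm : ∀ i ∈ range (b + 1 - a),
      (-1 : R) ^ (a + i) * (b.choose (a + i) : R) * ((a + i).choose a : R) =
        (-1) ^ a * (b.choose a : R) * ((-1) ^ i * ((b - a).choose i : R)) := by
    intro i _
    have h : b.choose (a + i) * (a + i).choose a = b.choose a * (b - a).choose i := by
      simpa using Nat.choose_mul (n := b) (k := a + i) (s := a) le_self_add
    rw [pow_add, mul_assoc _ _ ((a + i).choose a : R), ← Nat.cast_mul, h, Nat.cast_mul]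
    ring
  have halt : ∑ i ∈ range (b - a + 1), (-1 : R) ^ i * ((b - a).choose i : R) =
      if b - a = 0 then 1 else 0 := by
    simpa using congrArg (Int.cast : ℤ → R) (Int.alternating_sum_range_choose (n := b - a))
  rw [← Ico_add_one_right_eq_Icc, sum_Ico_eq_sum_range, sum_congr rfl hterm, ← mul_sum,
    show b + 1 - a = b - a + 1 by omega, halt]
  rcases hab.eq_or_lt with rfl | hlt
  · simp
  · simp [hlt.ne, (Nat.sub_pos_of_lt hlt).ne']

def reflectedBinomialTransform (n : ℕ) (f : ℕ → R) (l : ℕ) : R :=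
  (-1) ^ l * ∑ j ∈ Icc 1 (n - l), ((n - j).choose l : R) * f j

theorem sum_choose_mul_reflectedBinomialTransform (f : ℕ → R) {n m : ℕ} (hm1 : 1 ≤ m)
    (hm2 : m ≤ n) :
    ∑ l ∈ Icc (n - m) (n - 1), (l.choose (n - m) : R) * reflectedBinomialTransform n f l =
      (-1) ^ (n - m) * f m := by
  have hextend : ∀ l ∈ Icc (n - m) (n - 1),
      (l.choose (n - m) : R) * reflectedBinomialTransform n f l =
        ∑ j ∈ Icc 1 n, (-1) ^ l * ((n - j).choose l : R) * (l.choose (n - m) : R) * f j := by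
    intro l _
    rw [reflectedBinomialTransform, ← sum_subset (Icc_subset_Icc_right (Nat.sub_le n l))
      fun j hj hj' => by simp [Nat.choose_eq_zero_of_lt (by grind : n - j < l)], mul_sum,
      mul_sum]
    exact sum_congr rfl fun j _ => by ring
  have hcollapse : ∀ j ∈ Icc 1 n,
      ∑ l ∈ Icc (n - m) (n - 1), (-1) ^ l * ((n - j).choose l : R) * (l.choose (n - m) : R) * f j
        = if j = m then (-1) ^ (n - m) * f m else 0 := by
    intro j hj
    rw [← sum_mul, sum_neg_one_pow_mul_choose_mul_choose (Icc_subset_Icc_right (by grind))]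
    by_cases hjm : j = m
    · simp [hjm]
    · simp [hjm, show n - m ≠ n - j by grind]
  rw [sum_congr rfl hextend, sum_comm, sum_congr rfl hcollapse, sum_ite_eq' (Icc 1 n) m,
    if_pos (mem_Icc.mpr ⟨hm1, hm2⟩)]

end BinomialInversion

theorem statement11_general (r m : ℕ) (hm1 : 1 ≤ m) (hm2 : m ≤ 2 * r) (t : ℂ) :
    ∑ l ∈ Finset.Icc (2 * r - m) (2 * r - 1), (l.choose (2 * r - m) : ℂ) * alphaHat r l t =
      (-1 : ℂ) ^ m * alphaCoef r m t := by
  have hsign : (-1 : ℂ) ^ (2 * r - m) = (-1) ^ m := by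
    rw [neg_one_pow_eq_pow_mod_two, neg_one_pow_eq_pow_mod_two (n := m),
      show (2 * r - m) % 2 = m % 2 by omega]
  have hhat : ∀ l, alphaHat r l t = reflectedBinomialTransform (2 * r) (alphaCoef r · t) l :=
    fun _ => rfl
  simp only [hhat]
  rw [sum_choose_mul_reflectedBinomialTransform _ hm1 hm2, hsign]

theorem statement11 (r m : ℕ) (hr : 1 ≤ r) (hm1 : 1 ≤ m) (hm2 : m ≤ 2 * r) (t : ℂ) :
    ∑ l ∈ Finset.Icc (2 * r - m) (2 * r - 1), (l.choose (2 * r - m) : ℂ) * alphaHat r l t =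
      (-1 : ℂ) ^ m * alphaCoef r m t :=
  statement11_general r m hm1 hm2 t
end

section
/- Let m \ge 1 be an odd integer and let t be a real number with 0 < t < 1/2. Define J_{m,1}(w) := -t^{-2w} \sin(\pi w) \int_{0}^{t} \bigl(1 - \tfrac{\xi^2}{t^2}\bigr)^{-w} \xi^{m} \tan(\pi \xi)\, d\xi for complex w. Then J_{m,1} is (complex) differentiable at w = 0, J_{m,1}(0) = 0, and its derivative at w = 0 equals -\int_{0}^{t} \pi \xi^{m} \tan(\pi \xi)\, d\xi. -/
open Real MeasureTheory Filter Set Topology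

/-!
`sin (π w)` vanishes at `w = 0` with derivative `π`, so the derivative of `J_{m,1}` at `0` is `π`
times the value at `0` of the remaining factor `-t^{-2w} ∫₀ᵗ (1 - ξ²/t²)^{-w} ξ^m tan(πξ) dξ`,
provided that factor is continuous at `0`. It is: since `1 - ξ²/t² ≥ (t - ξ)/t`, the integrands
for `Re w ≤ s < 1` are dominated by a multiple of the integrable function `(t - ξ)^{-s}`.
-/

theorem HasDerivAt.smul_continuousAt_of_eq_zero {𝕜 F : Type*} [NontriviallyNormedField 𝕜]
    [NormedAddCommGroup F] [NormedSpace 𝕜 F] {f : 𝕜 → 𝕜} {g : 𝕜 → F} {f' x : 𝕜}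
    (hf : HasDerivAt f f' x) (hfx : f x = 0) (hg : ContinuousAt g x) :
    HasDerivAt (fun y => f y • g y) (f' • g x) x := by
  rw [hasDerivAt_iff_tendsto_slope] at hf ⊢
  have hslope : slope (fun y => f y • g y) x = fun y => slope f x y • g y := by
    funext y
    simp [slope_def_module, hfx, smul_smul]
  rw [hslope]
  exact hf.smul (hg.tendsto.mono_left nhdsWithin_le_nhds)

lemma sub_div_le_one_sub_sq_div_sq {t ξ : ℝ} (ht : 0 < t) (hξ : 0 ≤ ξ) (hξt : ξ ≤ t) :
    (t - ξ) / t ≤ 1 - ξ ^ 2 / t ^ 2 := by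
  have hdiff : 1 - ξ ^ 2 / t ^ 2 - (t - ξ) / t = ξ * (t - ξ) / t ^ 2 := by
    field_simp
    ring
  have : 0 ≤ ξ * (t - ξ) / t ^ 2 := div_nonneg (mul_nonneg hξ (by linarith)) (by positivity)
  linarith

lemma one_sub_sq_div_sq_pos {t ξ : ℝ} (ht : 0 < t) (hξ : 0 ≤ ξ) (hξt : ξ < t) :
    0 < 1 - ξ ^ 2 / t ^ 2 :=
  (div_pos (by linarith) ht).trans_le (sub_div_le_one_sub_sq_div_sq ht hξ hξt.le)

lemma norm_cpow_neg_one_sub_sq_div_sq_le {t ξ s : ℝ} {w : ℂ} (ht : 0 < t) (hξ : 0 ≤ ξ)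
    (hξt : ξ < t) (hs : 0 ≤ s) (hw : w.re ≤ s) :
    ‖((1 - ξ ^ 2 / t ^ 2 : ℝ) : ℂ) ^ (-w)‖ ≤ t ^ s * (t - ξ) ^ (-s) := by
  have hpos := one_sub_sq_div_sq_pos ht hξ hξt
  have hle_one : 1 - ξ ^ 2 / t ^ 2 ≤ 1 := by
    have : 0 ≤ ξ ^ 2 / t ^ 2 := by positivity
    linarith
  rw [Complex.norm_cpow_eq_rpow_re_of_pos hpos, Complex.neg_re]
  calc (1 - ξ ^ 2 / t ^ 2) ^ (-w.re)
      ≤ (1 - ξ ^ 2 / t ^ 2) ^ (-s) :=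
        Real.rpow_le_rpow_of_exponent_ge hpos hle_one (by linarith)
    _ ≤ ((t - ξ) / t) ^ (-s) :=
        Real.rpow_le_rpow_of_nonpos (div_pos (by linarith) ht)
          (sub_div_le_one_sub_sq_div_sq ht hξ hξt.le) (by linarith)
    _ = t ^ s * (t - ξ) ^ (-s) := by
        rw [Real.div_rpow (by linarith) ht.le, Real.rpow_neg ht.le s, div_inv_eq_mul, mul_comm]

theorem continuousAt_intervalIntegral_cpow_neg_one_sub_sq_div_sq_mul {t : ℝ} (ht : 0 < t)
    {f : ℝ → ℂ} (hf : ContinuousOn f (Icc 0 t)) {w₀ : ℂ} (hw₀ : w₀.re < 1) :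
    ContinuousAt
      (fun w : ℂ => ∫ ξ in (0 : ℝ)..t, ((1 - ξ ^ 2 / t ^ 2 : ℝ) : ℂ) ^ (-w) * f ξ) w₀ := by
  obtain ⟨C, hC⟩ := isCompact_Icc.exists_bound_of_continuousOn hf
  obtain ⟨s, hs, hs1⟩ := exists_between (max_lt hw₀ zero_lt_one)
  have hs0 : 0 ≤ s := (le_max_right _ _).trans hs.le
  have hnear : ∀ᶠ w in 𝓝 w₀, w.re < s :=
    Complex.continuous_re.continuousAt.eventually_lt continuousAt_const
      ((le_max_left _ _).trans_lt hs)
  have hne_t : ∀ᵐ ξ : ℝ, ξ ≠ t := compl_mem_ae_iff.mpr (measure_singleton t)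
  refine intervalIntegral.continuousAt_of_dominated_interval
    (bound := fun ξ => t ^ s * (t - ξ) ^ (-s) * C) ?_ ?_ ?_ ?_
  · refine Eventually.of_forall fun w => ?_
    rw [uIoc_of_le ht.le]
    exact (by fun_prop : Measurable fun ξ : ℝ => ((1 - ξ ^ 2 / t ^ 2 : ℝ) : ℂ) ^ (-w))
      |>.aestronglyMeasurable.mul
        ((hf.aestronglyMeasurable measurableSet_Icc).mono_set Ioc_subset_Icc_self)
  · filter_upwards [hnear] with w hw
    filter_upwards [hne_t] with ξ hξt hξ
    rw [uIoc_of_le ht.le] at hξ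
    rw [norm_mul]
    exact mul_le_mul (norm_cpow_neg_one_sub_sq_div_sq_le ht hξ.1.le
        (lt_of_le_of_ne hξ.2 hξt) hs0 hw.le) (hC ξ (Ioc_subset_Icc_self hξ))
      (norm_nonneg _) (by have := Real.rpow_nonneg (sub_nonneg.mpr hξ.2) (-s); positivity)
  · have hsing := ((intervalIntegral.intervalIntegrable_rpow' (a := 0) (b := t)
      (by linarith : -1 < -s)).comp_sub_left t).symm
    simp only [sub_zero, sub_self] at hsing
    exact (hsing.const_mul (t ^ s)).mul_const C
  · filter_upwards [hne_t] with ξ hξt hξ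
    rw [uIoc_of_le ht.le] at hξ
    have hbase : ((1 - ξ ^ 2 / t ^ 2 : ℝ) : ℂ) ≠ 0 :=
      Complex.ofReal_ne_zero.mpr (one_sub_sq_div_sq_pos ht hξ.1.le (lt_of_le_of_ne hξ.2 hξt)).ne'
    exact ((continuousAt_const_cpow hbase).comp continuous_neg.continuousAt).mul continuousAt_const

lemma continuousOn_tan_pi_mul : ContinuousOn (fun ξ => tan (π * ξ)) (Ioo (-(1 / 2)) (1 / 2)) := by
  refine continuousOn_tan_Ioo.comp (by fun_prop) fun ξ hξ => ⟨?_, ?_⟩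
  · nlinarith [hξ.1, pi_pos]
  · nlinarith [hξ.2, pi_pos]

theorem statement15_general (m : ℕ) (t : ℝ) (ht0 : 0 < t)
    (ht1 : t < 1 / 2) :
    (fun w : ℂ => -((t : ℂ) ^ (-(2 * w))) * Complex.sin (π * w) *
        ∫ ξ in (0 : ℝ)..t,
          ((1 - ξ ^ 2 / t ^ 2 : ℝ) : ℂ) ^ (-w) * (ξ : ℂ) ^ m * (Real.tan (π * ξ) : ℂ)) 0 = 0 ∧
    HasDerivAt
      (fun w : ℂ => -((t : ℂ) ^ (-(2 * w))) * Complex.sin (π * w) *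
        ∫ ξ in (0 : ℝ)..t,
          ((1 - ξ ^ 2 / t ^ 2 : ℝ) : ℂ) ^ (-w) * (ξ : ℂ) ^ m * (Real.tan (π * ξ) : ℂ))
      (-((∫ ξ in (0 : ℝ)..t, π * ξ ^ m * Real.tan (π * ξ) : ℝ) : ℂ)) 0 := by
  set I : ℂ → ℂ := fun w => ∫ ξ in (0 : ℝ)..t,
    ((1 - ξ ^ 2 / t ^ 2 : ℝ) : ℂ) ^ (-w) * (ξ : ℂ) ^ m * (Real.tan (π * ξ) : ℂ)
  have hf : ContinuousOn (fun ξ : ℝ => (ξ : ℂ) ^ m * (Real.tan (π * ξ) : ℂ)) (Icc 0 t) :=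
    (Complex.continuous_ofReal.pow m).continuousOn.mul <|
      Complex.continuous_ofReal.comp_continuousOn <|
        continuousOn_tan_pi_mul.mono fun ξ hξ => ⟨by linarith [hξ.1], by linarith [hξ.2]⟩
  have hI : ContinuousAt I 0 := by
    simpa only [I, mul_assoc] using
      continuousAt_intervalIntegral_cpow_neg_one_sub_sq_div_sq_mul ht0 hf (by simp)
  have hsin : HasDerivAt (fun w : ℂ => Complex.sin (π * w)) π 0 := by
    simpa using ((hasDerivAt_id (0 : ℂ)).const_mul (π : ℂ)).csin
  have hcpow : ContinuousAt (fun w : ℂ => (t : ℂ) ^ (-(2 * w))) 0 :=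
    (continuousAt_const_cpow (Complex.ofReal_ne_zero.mpr ht0.ne')).comp (by fun_prop)
  have hI0 : I 0 = ((∫ ξ in (0 : ℝ)..t, ξ ^ m * Real.tan (π * ξ) : ℝ) : ℂ) := by
    simp [I, ← intervalIntegral.integral_ofReal]
  have hrest : ContinuousAt (fun w : ℂ => -((t : ℂ) ^ (-(2 * w))) * I w) 0 := hcpow.neg.mul hI
  have hderiv : HasDerivAt (fun w : ℂ => Complex.sin (π * w) * (-((t : ℂ) ^ (-(2 * w))) * I w))
      (π * (-((t : ℂ) ^ (-(2 * (0 : ℂ)))) * I 0)) 0 :=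
    hsin.smul_continuousAt_of_eq_zero (by simp) hrest
  refine ⟨by simp, ?_⟩
  convert hderiv using 1
  · funext w
    simp only [I]
    ring
  · simp [hI0, mul_assoc, intervalIntegral.integral_const_mul]

theorem statement15 (m : ℕ) (hm : Odd m) (hm1 : 1 ≤ m) (t : ℝ) (ht0 : 0 < t)
    (ht1 : t < 1 / 2) :
    (fun w : ℂ => -((t : ℂ) ^ (-(2 * w))) * Complex.sin (π * w) *
        ∫ ξ in (0 : ℝ)..t,
          ((1 - ξ ^ 2 / t ^ 2 : ℝ) : ℂ) ^ (-w) * (ξ : ℂ) ^ m * (Real.tan (π * ξ) : ℂ)) 0 = 0 ∧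
    HasDerivAt
      (fun w : ℂ => -((t : ℂ) ^ (-(2 * w))) * Complex.sin (π * w) *
        ∫ ξ in (0 : ℝ)..t,
          ((1 - ξ ^ 2 / t ^ 2 : ℝ) : ℂ) ^ (-w) * (ξ : ℂ) ^ m * (Real.tan (π * ξ) : ℂ))
      (-((∫ ξ in (0 : ℝ)..t, π * ξ ^ m * Real.tan (π * ξ) : ℝ) : ℂ)) 0 :=
  statement15_general m t ht0 ht1
end

section
/- Let m \ge 0 be an integer, t > 0 a real number, \alpha a complex number with \Re(\alpha) > 0, and w a complex number with w \notin \{1, 2, \ldots, m+1\}. Then \int_{0}^{t} \xi^{m} (\xi+\alpha)^{-w} \, d\xi = \sum_{k=1}^{m+1} \frac{(-1)^{k-1} m!}{(m+1-k)!} \frac{t^{m+1-k} (t+\alpha)^{k-w}}{(1-w)_k} + (-1)^{m+1} m! \frac{\alpha^{m+1-w}}{(1-w)_{m+1}}, where all complex powers are principal-branch powers (well defined since \xi + \alpha, t+\alpha and \alpha have positive real part). -/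
/-!
Repeated integration by parts gives the antiderivative
`F ξ = ∑_{j=0}^{m} (-1)^j m!/(m-j)! ξ^(m-j) (ξ+α)^(j+1-w) / (1-w)_{j+1}` of
`ξ^m (ξ+α)^(-w)`: differentiating `(ξ+α)^(j+1-w)` produces the factor `j+1-w`, which cancels the
last factor of `(1-w)_{j+1}`, and the derivative of the sum telescopes. Since `Re (ξ+α) > 0` on
`[0, t]`, the principal power is differentiable there, and the integral is `F t - F 0`. After the
shift `k = j + 1`, `F t` is the sum in the statement, while `F 0` keeps only its `j = m` term.
-/

/-- The Pochhammer symbol `(x)_k = x(x+1)⋯(x+k-1)`. -/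
noncomputable def poch (x : ℂ) (k : ℕ) : ℂ := ∏ i ∈ Finset.range k, (x + i)

open Finset Complex

theorem poch_succ (x : ℂ) (k : ℕ) : poch x (k + 1) = poch x k * (x + k) :=
  prod_range_succ _ _

theorem poch_ne_zero_of_le {x : ℂ} {k n : ℕ} (hn : poch x n ≠ 0) (hk : k ≤ n) :
    poch x k ≠ 0 :=
  prod_ne_zero_iff.2 fun i hi => prod_ne_zero_iff.1 hn i (range_mono hk hi)

theorem poch_one_sub_ne_zero {w : ℂ} {n : ℕ} (hw : ∀ k ∈ Icc 1 n, w ≠ k) :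
    poch (1 - w) n ≠ 0 :=
  prod_ne_zero_iff.2 fun i hi h => hw (i + 1) (by simp at hi ⊢; omega) (by
    push_cast; linear_combination -h)

theorem hasDerivAt_pow_mul_cpow {z α : ℂ} (hz : z + α ∈ slitPlane) (n : ℕ) (s : ℂ) :
    HasDerivAt (fun z => z ^ n * (z + α) ^ s)
      (n * z ^ (n - 1) * (z + α) ^ s + z ^ n * (s * (z + α) ^ (s - 1))) z := by
  have hcpow := ((hasDerivAt_id z).add_const α).cpow_const (c := s) hz
  simp only [id, mul_one] at hcpow
  exact (hasDerivAt_pow n z).fun_mul hcpow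

section Antiderivative

variable (m : ℕ) (α w : ℂ)

/-- The `j`-th summand of `antiderivPowMulCpow` has derivative `partsTerm j - partsTerm (j + 1)`,
so the derivative of the sum telescopes to `partsTerm 0 = z ^ m * (z + α) ^ (-w)`. -/
noncomputable def partsTerm (z : ℂ) (j : ℕ) : ℂ :=
  (-1) ^ j * m.descFactorial j * (z ^ (m - j) * (z + α) ^ ((j : ℂ) - w)) / poch (1 - w) j

noncomputable def antiderivPowMulCpow (z : ℂ) : ℂ :=
  ∑ j ∈ range (m + 1),
    (-1) ^ j * m.descFactorial j * (z ^ (m - j) * (z + α) ^ ((j : ℂ) + 1 - w)) /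
      poch (1 - w) (j + 1)

variable {m α w}

theorem hasDerivAt_antiderivPowMulCpow_summand {z : ℂ} (hz : z + α ∈ slitPlane) {j : ℕ}
    (hpoch : poch (1 - w) (j + 1) ≠ 0) :
    HasDerivAt (fun z => (-1) ^ j * m.descFactorial j *
        (z ^ (m - j) * (z + α) ^ ((j : ℂ) + 1 - w)) / poch (1 - w) (j + 1))
      (partsTerm m α w z j - partsTerm m α w z (j + 1)) z := by
  refine (((hasDerivAt_pow_mul_cpow hz (m - j) ((j : ℂ) + 1 - w)).const_mul
    ((-1 : ℂ) ^ j * (m.descFactorial j : ℂ))).div_const (poch (1 - w) (j + 1))).congr_deriv ?_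
  obtain ⟨hpj, hwj⟩ := mul_ne_zero_iff.1 ((poch_succ _ _) ▸ hpoch)
  have hexp : (j : ℂ) + 1 - w - 1 = j - w := by ring
  simp only [partsTerm, hexp, Nat.descFactorial_succ, poch_succ, Nat.sub_sub]
  push_cast
  field_simp
  ring

theorem hasDerivAt_antiderivPowMulCpow {z : ℂ} (hz : z + α ∈ slitPlane)
    (hpoch : poch (1 - w) (m + 1) ≠ 0) :
    HasDerivAt (antiderivPowMulCpow m α w) (z ^ m * (z + α) ^ (-w)) z := by
  refine (HasDerivAt.fun_sum fun j hj => hasDerivAt_antiderivPowMulCpow_summand (m := m) hz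
    (poch_ne_zero_of_le hpoch (mem_range.1 hj))).congr_deriv ?_
  rw [sum_range_sub' (partsTerm m α w z)]
  simp [partsTerm, poch]

theorem antiderivPowMulCpow_zero :
    antiderivPowMulCpow m α w 0 =
      (-1) ^ m * m.factorial * α ^ ((m : ℂ) + 1 - w) / poch (1 - w) (m + 1) := by
  rw [antiderivPowMulCpow, sum_eq_single_of_mem m (self_mem_range_succ m)]
  · simp [Nat.descFactorial_self]
  · intro j hj hne
    have hjm : j < m := lt_of_le_of_ne (Nat.lt_succ_iff.1 (mem_range.1 hj)) hne
    simp [zero_pow (Nat.sub_ne_zero_of_lt hjm)]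

theorem antiderivPowMulCpow_eq_sum_Icc (z : ℂ) :
    antiderivPowMulCpow m α w z = ∑ k ∈ Icc 1 (m + 1),
      ((-1) ^ (k - 1) * m.factorial / (m + 1 - k).factorial) *
        (z ^ (m + 1 - k) * (z + α) ^ ((k : ℂ) - w) / poch (1 - w) k) := by
  rw [antiderivPowMulCpow, ← Ico_add_one_right_eq_Icc, sum_Ico_eq_sum_range]
  refine sum_congr rfl fun j hj => ?_
  have hjm : j ≤ m := Nat.lt_succ_iff.1 (mem_range.1 hj)
  have hdesc : (m.factorial : ℂ) / (m - j).factorial = m.descFactorial j := by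
    rw [div_eq_iff (by exact_mod_cast (m - j).factorial_ne_zero), ← Nat.cast_mul, mul_comm,
      Nat.factorial_mul_descFactorial hjm]
  rw [show m + 1 - (1 + j) = m - j by omega, Nat.add_sub_cancel_left, add_comm 1 j,
    ← hdesc]
  push_cast
  ring

end Antiderivative

theorem statement17 (m : ℕ) (t : ℝ) (ht : 0 < t) (α : ℂ) (hα : 0 < α.re) (w : ℂ)
    (hw : ∀ k ∈ Finset.Icc 1 (m + 1), w ≠ (k : ℂ)) :
    ∫ ξ in (0 : ℝ)..t, (ξ : ℂ) ^ m * ((ξ : ℂ) + α) ^ (-w) =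
      ∑ k ∈ Finset.Icc 1 (m + 1),
        ((-1 : ℂ) ^ (k - 1) * (m.factorial : ℂ) / ((m + 1 - k).factorial : ℂ)) *
          ((t : ℂ) ^ (m + 1 - k) * ((t : ℂ) + α) ^ ((k : ℂ) - w) / poch (1 - w) k) +
      (-1 : ℂ) ^ (m + 1) * (m.factorial : ℂ) * α ^ (((m : ℂ) + 1) - w) / poch (1 - w) (m + 1) := by
  have hslit : ∀ ξ ∈ Set.uIcc 0 t, (ξ : ℂ) + α ∈ slitPlane := fun ξ hξ => by
    rw [Set.uIcc_of_le ht.le] at hξ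
    exact Or.inl (by simp only [add_re, ofReal_re]; linarith [hξ.1])
  have hderiv : ∀ ξ ∈ Set.uIcc 0 t, HasDerivAt (fun ξ : ℝ => antiderivPowMulCpow m α w ξ)
      ((ξ : ℂ) ^ m * ((ξ : ℂ) + α) ^ (-w)) ξ := fun ξ hξ =>
    (hasDerivAt_antiderivPowMulCpow (hslit ξ hξ) (poch_one_sub_ne_zero hw)).comp_ofReal
  have hcont : ContinuousOn (fun ξ : ℝ => (ξ : ℂ) ^ m * ((ξ : ℂ) + α) ^ (-w))
      (Set.uIcc 0 t) :=
    fun ξ hξ => ((continuous_ofReal.pow m).continuousAt.mul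
      ((continuous_ofReal.add continuous_const).continuousAt.cpow continuousAt_const
        (hslit ξ hξ))).continuousWithinAt
  rw [intervalIntegral.integral_eq_sub_of_hasDerivAt hderiv hcont.intervalIntegrable,
    antiderivPowMulCpow_eq_sum_Icc, ofReal_zero, antiderivPowMulCpow_zero]
  ring
end
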